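/- arXiv:0904.0589 — 2 statements merged into one kernel-verified Lean document; each statement's English description precedes it below -/
import Mathlib

section
/- The immediate consequences operator is continuous: for any ground program P and every nonempty directed set S of interpretations (directed with respect to the pointwise order), T_P(sup S) = sup { T_P(f) : f ∈ S }, where suprema of sets of interpretations are taken pointwise in Fin (n+1). -/
/-
There are only finitely many interpretations, so a nonempty directed set of them has a greatest
element, which is its supremum. Hence continuity of `T_P` reduces to monotonicity, and `T_P` is
monotone because every connective, every hedge and both t-norms are.
-/

namespace FLLP

def CL {n : ℕ} (x y : Fin (n+1)) : Fin (n+1) :=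
  ⟨x.val + y.val - n, by have := x.isLt; have := y.isLt; omega⟩

def RL {n : ℕ} (j i : Fin (n+1)) : Fin (n+1) :=
  if h : i ≤ j then ⟨n, n.lt_succ_self⟩
  else ⟨n + j.val - i.val, by
    have h' : j.val < i.val := Fin.lt_def.mp (lt_of_not_ge h)
    have := i.isLt; omega⟩

def RG {n : ℕ} (j i : Fin (n+1)) : Fin (n+1) :=
  if i ≤ j then ⟨n, n.lt_succ_self⟩ else j

inductive Body (A H : Type) : Type where
  | atom : A → Body A H
  | andG : Body A H → Body A H → Body A H
  | andL : Body A H → Body A H → Body A H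
  | or   : Body A H → Body A H → Body A H
  | hedge : H → Body A H → Body A H
  deriving DecidableEq

def eval {n : ℕ} {A H : Type} (hinv : H → Fin (n+1) → Fin (n+1))
    (f : A → Fin (n+1)) : Body A H → Fin (n+1)
  | .atom a => f a
  | .andG B₁ B₂ => min (eval hinv f B₁) (eval hinv f B₂)
  | .andL B₁ B₂ => CL (eval hinv f B₁) (eval hinv f B₂)
  | .or B₁ B₂ => max (eval hinv f B₁) (eval hinv f B₂)
  | .hedge h B => hinv h (eval hinv f B)

inductive Imp : Type where
  | luka : Imp
  | godel : Imp
  deriving DecidableEq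

def tnorm {n : ℕ} : Imp → Fin (n+1) → Fin (n+1) → Fin (n+1)
  | .luka => CL
  | .godel => min

def implicator {n : ℕ} : Imp → Fin (n+1) → Fin (n+1) → Fin (n+1)
  | .luka => RL
  | .godel => RG

structure Program (n : ℕ) (A H : Type) [DecidableEq A] [DecidableEq H] : Type where
  rules : Finset (A × Body A H × Fin (n+1) × Imp)
  facts : Finset (A × Fin (n+1))

noncomputable def TP {n : ℕ} {A H : Type} [DecidableEq A] [DecidableEq H]
    (P : Program n A H) (hinv : H → Fin (n+1) → Fin (n+1))
    (f : A → Fin (n+1)) : A → Fin (n+1) := fun a =>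
  max ((P.rules.filter (fun R => R.1 = a)).sup
        (fun R => tnorm R.2.2.2 (eval hinv f R.2.1) R.2.2.1))
      ((P.facts.filter (fun F => F.1 = a)).sup (fun F => F.2))

def isModel {n : ℕ} {A H : Type} [DecidableEq A] [DecidableEq H]
    (P : Program n A H) (hinv : H → Fin (n+1) → Fin (n+1))
    (f : A → Fin (n+1)) : Prop :=
  (∀ R ∈ P.rules, R.2.2.1 ≤ implicator R.2.2.2 (f R.1) (eval hinv f R.2.1)) ∧
  (∀ F ∈ P.facts, F.2 ≤ f F.1)

theorem _root_.DirectedOn.exists_isGreatest_of_finite {α : Type*} [PartialOrder α] {s : Set α}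
    (hdir : DirectedOn (· ≤ ·) s) (hfin : s.Finite) (hne : s.Nonempty) : ∃ g, IsGreatest s g := by
  obtain ⟨g, hgs, hgmax⟩ := hfin.exists_maximal hne
  refine ⟨g, hgs, fun f hfs => ?_⟩
  obtain ⟨z, hzs, hfz, hgz⟩ := hdir f hfs g hgs
  exact hfz.trans (hgmax hzs hgz)

theorem _root_.Monotone.map_sSup_of_isGreatest {α β : Type*} [CompleteLattice α] [CompleteLattice β]
    {f : α → β} (hf : Monotone f) {s : Set α} {g : α} (hg : IsGreatest s g) :
    f (sSup s) = sSup (f '' s) := by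
  rw [hg.isLUB.sSup_eq, (hf.map_isGreatest hg).isLUB.sSup_eq]

theorem CL_le_CL {n : ℕ} {a b c d : Fin (n+1)} (hac : a ≤ c) (hbd : b ≤ d) :
    CL a b ≤ CL c d := by
  rw [Fin.le_def] at hac hbd ⊢
  simp only [CL]
  omega

theorem tnorm_mono_left {n : ℕ} (i : Imp) (r : Fin (n+1)) : Monotone (fun x => tnorm i x r) := by
  intro x y hxy
  cases i with
  | luka => exact CL_le_CL hxy le_rfl
  | godel => exact min_le_min_right r hxy

section

variable {n : ℕ} {A H : Type} {hinv : H → Fin (n+1) → Fin (n+1)}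

theorem eval_mono (hmono : ∀ h, Monotone (hinv h)) (B : Body A H) :
    Monotone (fun f => eval hinv f B) := by
  intro f g hfg
  induction B with
  | atom a => exact hfg a
  | andG B₁ B₂ ih₁ ih₂ => exact min_le_min ih₁ ih₂
  | andL B₁ B₂ ih₁ ih₂ => exact CL_le_CL ih₁ ih₂
  | or B₁ B₂ ih₁ ih₂ => exact max_le_max ih₁ ih₂
  | hedge h B ih => exact hmono h ih

theorem TP_mono [DecidableEq A] [DecidableEq H] (P : Program n A H)
    (hmono : ∀ h, Monotone (hinv h)) : Monotone (TP P hinv) := by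
  intro f g hfg a
  refine max_le_max (Finset.sup_mono_fun fun R _ => ?_) le_rfl
  exact tnorm_mono_left R.2.2.2 R.2.2.1 (eval_mono hmono R.2.1 hfg)

end

theorem TP_continuous_general (n : ℕ) (A H : Type) [Fintype A]
    [DecidableEq A] [DecidableEq H]
    (hinv : H → Fin (n+1) → Fin (n+1)) (hmono : ∀ h, Monotone (hinv h))
    (P : Program n A H)
    (S : Set (A → Fin (n+1))) (hne : S.Nonempty) (hdir : DirectedOn (· ≤ ·) S) :
    TP P hinv (sSup S) = sSup (TP P hinv '' S) := by
  obtain ⟨g, hg⟩ := hdir.exists_isGreatest_of_finite S.toFinite hne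
  exact (TP_mono P hmono).map_sSup_of_isGreatest hg

theorem TP_continuous (n : ℕ) (hn : 1 ≤ n) (A H : Type) [Fintype A] [Fintype H]
    [DecidableEq A] [DecidableEq H]
    (hinv : H → Fin (n+1) → Fin (n+1)) (hmono : ∀ h, Monotone (hinv h))
    (P : Program n A H)
    (S : Set (A → Fin (n+1))) (hne : S.Nonempty) (hdir : DirectedOn (· ≤ ·) S) :
    TP P hinv (sSup S) = sSup (TP P hinv '' S) :=
  TP_continuous_general n A H hinv hmono P S hne hdir

end FLLP
end

section
/- Completeness for ground queries, fixpoint form: let P be a ground program, a ∈ A an atom, and x ∈ Fin (n+1). If x ≤ f(a) for every model f of P (i.e., x is a correct answer for P and the ground query ?a), then there exists k ∈ ℕ such that x ≤ T_P^[k](⊥)(a), where ⊥ is the interpretation mapping every atom to v_0. -/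
namespace FLLP

/-!
The iterates `T_P^[k] ⊥` form an increasing chain in the finite lattice of interpretations, so
they reach a fixpoint of `T_P`. Since each `C_i` is left adjoint to `R_i`, every prefixpoint of
`T_P` is a model of `P`; hence every lower bound of the values of `a` in the models of `P`
lies below the value of `a` in that fixpoint.
-/

theorem _root_.Monotone.exists_isFixedPt_iterate_bot {α : Type*} [PartialOrder α] [OrderBot α]
    [WellFoundedGT α] {f : α → α} (hf : Monotone f) : ∃ k, Function.IsFixedPt f (f^[k] ⊥) := by
  obtain ⟨k, hk⟩ := WellFoundedGT.monotone_chain_condition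
    ⟨fun k => f^[k] ⊥, hf.monotone_iterate_of_le_map bot_le⟩
  exact ⟨k, (Function.iterate_succ_apply' f k ⊥).symm.trans (hk (k + 1) k.le_succ).symm⟩

lemma CL_le_CL_s6 {n : ℕ} {x x' y y' : Fin (n+1)} (hx : x ≤ x') (hy : y ≤ y') :
    CL x y ≤ CL x' y' := by
  simp only [CL, Fin.le_def] at *
  omega

lemma tnorm_le_tnorm_left {n : ℕ} (i : Imp) {x x' : Fin (n+1)} (y : Fin (n+1)) (hx : x ≤ x') :
    tnorm i x y ≤ tnorm i x' y := by
  cases i with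
  | luka => exact CL_le_CL_s6 hx le_rfl
  | godel => exact min_le_min_right y hx

lemma le_implicator_of_tnorm_le {n : ℕ} (i : Imp) {x y z : Fin (n+1)} (h : tnorm i x y ≤ z) :
    y ≤ implicator i z x := by
  cases i with
  | luka =>
    simp only [tnorm, implicator, CL, RL, Fin.le_def] at *
    split <;> simp only <;> omega
  | godel =>
    simp only [tnorm, implicator, RG] at *
    split_ifs with hxz
    · exact Fin.le_last y
    · exact (min_le_iff.mp h).resolve_left hxz

section

variable {n : ℕ} {A H : Type} (hinv : H → Fin (n+1) → Fin (n+1))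

lemma eval_monotone (hmono : ∀ h, Monotone (hinv h)) (B : Body A H) :
    Monotone fun f : A → Fin (n+1) => eval hinv f B := by
  intro f g hfg
  induction B with
  | atom a => exact hfg a
  | andG B₁ B₂ ih₁ ih₂ => exact min_le_min ih₁ ih₂
  | andL B₁ B₂ ih₁ ih₂ => exact CL_le_CL_s6 ih₁ ih₂
  | or B₁ B₂ ih₁ ih₂ => exact max_le_max ih₁ ih₂
  | hedge h B ih => exact hmono h ih

variable [DecidableEq A] [DecidableEq H] (P : Program n A H)

lemma TP_monotone (hmono : ∀ h, Monotone (hinv h)) : Monotone (TP P hinv) := fun _ _ hfg _ =>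
  max_le_max (Finset.sup_mono_fun fun R _ =>
    tnorm_le_tnorm_left _ _ (eval_monotone hinv hmono R.2.1 hfg)) le_rfl

lemma tnorm_le_TP {f : A → Fin (n+1)} {R : A × Body A H × Fin (n+1) × Imp} (hR : R ∈ P.rules) :
    tnorm R.2.2.2 (eval hinv f R.2.1) R.2.2.1 ≤ TP P hinv f R.1 :=
  le_max_of_le_left <| Finset.le_sup (f := fun S => tnorm S.2.2.2 (eval hinv f S.2.1) S.2.2.1)
    ((Finset.mem_filter (p := fun S => S.1 = R.1)).mpr ⟨hR, rfl⟩)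

lemma fact_le_TP {f : A → Fin (n+1)} {F : A × Fin (n+1)} (hF : F ∈ P.facts) :
    F.2 ≤ TP P hinv f F.1 :=
  le_max_of_le_right <| Finset.le_sup (f := fun G => G.2)
    ((Finset.mem_filter (p := fun G => G.1 = F.1)).mpr ⟨hF, rfl⟩)

lemma isModel_of_TP_le {f : A → Fin (n+1)} (hf : TP P hinv f ≤ f) : isModel P hinv f :=
  ⟨fun _ hR => le_implicator_of_tnorm_le _ ((tnorm_le_TP hinv P hR).trans (hf _)),
    fun _ hF => (fact_le_TP hinv P hF).trans (hf _)⟩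

end

theorem TP_complete_ground_general (n : ℕ) (A H : Type) [Fintype A]
    [DecidableEq A] [DecidableEq H]
    (hinv : H → Fin (n+1) → Fin (n+1)) (hmono : ∀ h, Monotone (hinv h))
    (P : Program n A H)
    (a : A) (x : Fin (n+1))
    (hx : ∀ f : A → Fin (n+1), isModel P hinv f → x ≤ f a) :
    ∃ k : ℕ, x ≤ (TP P hinv)^[k] (fun _ => 0) a := by
  obtain ⟨k, hfix⟩ := (TP_monotone hinv P hmono).exists_isFixedPt_iterate_bot
  exact ⟨k, hx _ (isModel_of_TP_le hinv P hfix.le)⟩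

theorem TP_complete_ground (n : ℕ) (hn : 1 ≤ n) (A H : Type) [Fintype A] [Fintype H]
    [DecidableEq A] [DecidableEq H]
    (hinv : H → Fin (n+1) → Fin (n+1)) (hmono : ∀ h, Monotone (hinv h))
    (P : Program n A H)
    (a : A) (x : Fin (n+1))
    (hx : ∀ f : A → Fin (n+1), isModel P hinv f → x ≤ f a) :
    ∃ k : ℕ, x ≤ (TP P hinv)^[k] (fun _ => 0) a :=
  TP_complete_ground_general n A H hinv hmono P a x hx

end FLLP
end
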